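/- For each integer n ≥ 3, one has F_{2,n}(w) = G_n(w) − G_{n-1}(w+z) / (w(w+x)). -/

import Mathlib

open Finset MvPolynomial

noncomputable section

/-- The field of rational functions in three variables `w, x, z` over `ℚ`. -/
abbrev F3 : Type := FractionRing (MvPolynomial (Fin 3) ℚ)

/-- the variable `w` -/
def W : F3 := algebraMap (MvPolynomial (Fin 3) ℚ) F3 (X 0)
/-- the variable `x` -/
def Xv : F3 := algebraMap (MvPolynomial (Fin 3) ℚ) F3 (X 1)
/-- the variable `z` -/
def Zv : F3 := algebraMap (MvPolynomial (Fin 3) ℚ) F3 (X 2)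

/-- `G_n(w)`, defined by `G_1(w) = 1/w` and, for `n ≥ 2`,
`G_n(w) = ∑_{k=1}^{n-1} G_k(w) G_{n-k}(w+kz) / (w+(n-1)x)`. -/
def G : ℕ → F3 → F3
  | 0, _ => 0
  | 1, w => 1 / w
  | (n + 2), w =>
      ∑ k ∈ (Finset.Icc 1 (n + 1)).attach,
        G k.1 w * G (n + 2 - k.1) (w + (k.1 : F3) * Zv) / (w + ((n + 1 : ℕ) : F3) * Xv)
  termination_by n _ => n
  decreasing_by
  · have := Finset.mem_Icc.mp k.2; omega
  · have := Finset.mem_Icc.mp k.2; omega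

/-- `F_{k,n}(w)` for `1 ≤ k < n`, defined by `F_{1,n}(w) = G_n(w)` and, for `k ≥ 2`,
`F_{k,n}(w) = ∑_{i=1}^{n-k-1} G_{n-k-i}(w+(k+i)z) F_{k,k+i}(w) / (w+(n-1)x)
  + ∑_{i=1}^{k-1} (w+iz) G_i(w+x) F_{k-i,n-i}(w+iz) / (w(w+(n-1)x))`. -/
def Fkn : ℕ → ℕ → F3 → F3
  | 0, _, _ => 0
  | 1, n, w => G n w
  | (j + 2), n, w =>
      (∑ i ∈ (Finset.Icc 1 (n - (j + 2) - 1)).attach,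
        G (n - (j + 2) - i.1) (w + (((j + 2) + i.1 : ℕ) : F3) * Zv) * Fkn (j + 2) ((j + 2) + i.1) w /
          (w + ((n - 1 : ℕ) : F3) * Xv)) +
      ∑ i ∈ (Finset.Icc 1 (j + 1)).attach,
        (w + (i.1 : F3) * Zv) * G i.1 (w + Xv) * Fkn ((j + 2) - i.1) (n - i.1) (w + (i.1 : F3) * Zv) /
          (w * (w + ((n - 1 : ℕ) : F3) * Xv))
  termination_by k n _ => k + n
  decreasing_by
  · have := Finset.mem_Icc.mp i.2; omega
  · have := Finset.mem_Icc.mp i.2; omega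

/-!
Induction on `n`. Substituting the claim for `F_{2,k}`, `k < n`, into the first sum of the
recursion for `F_{2,n}` leaves two convolution sums of `G`: the recursions for `G_n(w)` and for
`G_{n-1}(w+z)`, with their first two terms, resp. first term, missing. The missing terms involving
`G_{n-2}(w+2z)` cancel each other (as `G_2(w) = 1/(w(w+z)(w+x))`), and the remaining ones combine
with the second sum of the recursion to `-G_{n-1}(w+z)/(w(w+x))`.
-/

lemma W_add_mul_Xv_add_mul_Zv_ne_zero (a b : ℕ) : W + a * Xv + b * Zv ≠ 0 := by
  have hpoly : (X 0 + (a : MvPolynomial (Fin 3) ℚ) * X 1 + (b : MvPolynomial (Fin 3) ℚ) * X 2)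
      ≠ 0 := fun h ↦ by
    simpa using congrArg (eval fun i ↦ if i = 0 then (1 : ℚ) else 0) h
  simpa [W, Xv, Zv] using
    (map_ne_zero_iff _ (IsFractionRing.injective (MvPolynomial (Fin 3) ℚ) F3)).mpr hpoly

lemma G_one (w : F3) : G 1 w = 1 / w := by
  rw [G]

lemma G_eq_sum_div {n : ℕ} (hn : 2 ≤ n) (w : F3) :
    G n w = (∑ k ∈ Icc 1 (n - 1), G k w * G (n - k) (w + k * Zv)) /
      (w + ((n - 1 : ℕ) : F3) * Xv) := by
  obtain ⟨m, rfl⟩ : ∃ m, n = m + 2 := ⟨n - 2, by omega⟩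
  rw [G, sum_attach (Icc 1 (m + 1))
    (fun k ↦ G k w * G (m + 2 - k) (w + k * Zv) / (w + ((m + 1 : ℕ) : F3) * Xv)), ← sum_div]
  rfl

lemma G_two (w : F3) : G 2 w = 1 / (w * (w + Zv) * (w + Xv)) := by
  rw [G_eq_sum_div le_rfl]
  norm_num [G_one, div_div]
  ring

lemma sum_Icc_one_add {M : Type*} [AddCommMonoid M] (f : ℕ → M) (j m : ℕ) :
    ∑ k ∈ Icc 1 (j + m), f k = ∑ k ∈ Icc 1 j, f k + ∑ i ∈ Icc 1 m, f (j + i) := by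
  induction m with
  | zero => simp
  | succ m ih => rw [← add_assoc, sum_Icc_succ_top (by omega), ih, sum_Icc_succ_top (by omega),
      add_assoc, add_assoc]

lemma sum_G_mul_G_tail {j m : ℕ} (hjm : 0 < j + m) (w : F3)
    (hw : w + ((j + m : ℕ) : F3) * Xv ≠ 0) :
    ∑ i ∈ Icc 1 m, G (j + i) w * G (m + 1 - i) (w + ((j + i : ℕ) : F3) * Zv) =
      (w + ((j + m : ℕ) : F3) * Xv) * G (j + m + 1) w -
        ∑ k ∈ Icc 1 j, G k w * G (j + m + 1 - k) (w + k * Zv) := by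
  rw [G_eq_sum_div (by omega), Nat.add_sub_cancel, mul_div_cancel₀ _ hw, sum_Icc_one_add,
    add_sub_cancel_left]
  refine sum_congr rfl fun i _ ↦ ?_
  rw [show j + m + 1 - (j + i) = m + 1 - i by omega]

lemma sum_G_mul_G_shift_one (m : ℕ) (w : F3) (hw : w + ((m + 1 : ℕ) : F3) * Xv ≠ 0) :
    ∑ i ∈ Icc 1 m, G (1 + i) w * G (m + 1 - i) (w + ((1 + i : ℕ) : F3) * Zv) =
      (w + ((m + 1 : ℕ) : F3) * Xv) * G (m + 2) w - G (m + 1) (w + Zv) / w := by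
  rw [sum_G_mul_G_tail (by omega) w (by rwa [add_comm 1])]
  norm_num [G_one, add_comm 1 m, div_eq_inv_mul]

lemma sum_G_mul_G_shift_two (m : ℕ) (w : F3) (hw : w + ((m + 2 : ℕ) : F3) * Xv ≠ 0) :
    ∑ i ∈ Icc 1 m, G (2 + i) w * G (m + 1 - i) (w + ((2 + i : ℕ) : F3) * Zv) =
      (w + ((m + 2 : ℕ) : F3) * Xv) * G (m + 3) w - G (m + 2) (w + Zv) / w -
        G (m + 1) (w + 2 * Zv) / (w * (w + Zv) * (w + Xv)) := by
  rw [sum_G_mul_G_tail (by omega) w (by rwa [add_comm 2]), add_comm 2 m,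
    sum_Icc_succ_top (by omega), Icc_self, sum_singleton, show m + 2 + 1 - 2 = m + 1 by omega]
  simp only [add_assoc, Nat.reduceAdd, show m + 3 - 1 = m + 2 by omega, G_one, G_two,
    Nat.cast_one, Nat.cast_ofNat, one_mul, div_eq_mul_inv, mul_inv]
  ring

lemma Fkn_two_add_three (m : ℕ) (w : F3) :
    Fkn 2 (m + 3) w =
      (∑ i ∈ Icc 1 m, G (m + 1 - i) (w + ((2 + i : ℕ) : F3) * Zv) * Fkn 2 (2 + i) w) /
          (w + ((m + 2 : ℕ) : F3) * Xv) +
        (w + Zv) * G 1 (w + Xv) * G (m + 2) (w + Zv) / (w * (w + ((m + 2 : ℕ) : F3) * Xv)) := by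
  rw [Fkn, sum_attach (Icc 1 (m + 3 - 2 - 1)) (fun i ↦
      G (m + 3 - 2 - i) (w + ((2 + i : ℕ) : F3) * Zv) * Fkn 2 (2 + i) w /
        (w + ((m + 3 - 1 : ℕ) : F3) * Xv)),
    sum_attach (Icc 1 1) (fun i : ℕ ↦
      (w + i * Zv) * G i (w + Xv) * Fkn (2 - i) (m + 3 - i) (w + i * Zv) /
        (w * (w + ((m + 3 - 1 : ℕ) : F3) * Xv))), ← sum_div]
  simp only [show m + 3 - 2 - 1 = m by omega, show m + 3 - 1 = m + 2 by omega,
    fun i ↦ show m + 3 - 2 - i = m + 1 - i by omega, Icc_self, sum_singleton, Nat.cast_one, one_mul]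
  rw [Fkn]

/-- For each `n ≥ 3`, `F_{2,n}(w) = G_n(w) - G_{n-1}(w+z) / (w(w+x))`. -/
theorem F_two_n (n : ℕ) (hn : 3 ≤ n) :
    Fkn 2 n W = G n W - G (n - 1) (W + Zv) / (W * (W + Xv)) := by
  induction n using Nat.strong_induction_on with
  | _ n ih =>
  obtain ⟨m, rfl⟩ : ∃ m, n = m + 3 := ⟨n - 3, by omega⟩
  have hF : ∀ i ∈ Icc 1 m,
      G (m + 1 - i) (W + ((2 + i : ℕ) : F3) * Zv) * Fkn 2 (2 + i) W =
        G (2 + i) W * G (m + 1 - i) (W + ((2 + i : ℕ) : F3) * Zv) -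
          G (1 + i) (W + Zv) * G (m + 1 - i) (W + Zv + ((1 + i : ℕ) : F3) * Zv) /
            (W * (W + Xv)) := fun i hi ↦ by
    have hi := mem_Icc.mp hi
    rw [ih (2 + i) (by omega) (by omega), show 2 + i - 1 = 1 + i by omega,
      show W + Zv + ((1 + i : ℕ) : F3) * Zv = W + ((2 + i : ℕ) : F3) * Zv by push_cast; ring]
    ring
  have hne (a b : ℕ) := W_add_mul_Xv_add_mul_Zv_ne_zero a b
  rw [Fkn_two_add_three, sum_congr rfl hF, sum_sub_distrib, ← sum_div,
    sum_G_mul_G_shift_two m W (by simpa using hne (m + 2) 0),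
    sum_G_mul_G_shift_one m (W + Zv) (by simpa [add_right_comm] using hne (m + 1) 1),
    show W + Zv + Zv = W + 2 * Zv by ring, G_one, show m + 3 - 1 = m + 2 by omega]
  have h0 : W ≠ 0 := by simpa using hne 0 0
  have hx : W + Xv ≠ 0 := by simpa using hne 1 0
  have hz : W + Zv ≠ 0 := by simpa using hne 0 1
  have hD : W + ((m : F3) + 2) * Xv ≠ 0 := by simpa using hne (m + 2) 0
  push_cast
  field_simp
  ring
end
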